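/- arXiv:1404.6036 — 4 statements merged into one kernel-verified Lean document; each statement's English description precedes it below -/
import Mathlib

section
/- If F₁ and F₂ are formulas in unit chain expansion (containing no ¬), then F₁⋗F₂ reduces via the ⋗-rewrite rules to some formula in unit chain expansion. -/
/-- Atomic symbols: literals from `A` together with ⊤ and ⊥. -/
inductive Atom (A : Type) : Type where
  | lit : A → Atom A
  | top : Atom A
  | bot : Atom A

/-- Complement on atoms, induced by a complement map `c` on literals. -/
def Atom.compl {A : Type} (c : A → A) : Atom A → Atom A
  | .lit a => .lit (c a)
  | .top => .bot
  | .bot => .top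

/-- Formulas of gradual classical logic. `grad` is the connective ⋗. -/
inductive Fm (A : Type) : Type where
  | atom : Atom A → Fm A
  | and : Fm A → Fm A → Fm A
  | or : Fm A → Fm A → Fm A
  | neg : Fm A → Fm A
  | grad : Fm A → Fm A → Fm A

/-- One-step rewriting using only the five ⋗-rules (with congruence closure). -/
inductive GStep {A : Type} : Fm A → Fm A → Prop where
  | gradAssoc (F G H) : GStep (.grad (.grad F G) H)
      (.and (.grad F H) (.or (.grad F G) (.grad F (.grad G H))))
  | gradAndL (F G H) : GStep (.grad (.and F G) H) (.and (.grad F H) (.grad G H))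
  | gradOrL (F G H) : GStep (.grad (.or F G) H) (.or (.grad F H) (.grad G H))
  | gradAndR (F G H) : GStep (.grad F (.and G H)) (.and (.grad F G) (.grad F H))
  | gradOrR (F G H) : GStep (.grad F (.or G H)) (.or (.grad F G) (.grad F H))
  | andL {F F'} (G) : GStep F F' → GStep (.and F G) (.and F' G)
  | andR (F) {G G'} : GStep G G' → GStep (.and F G) (.and F G')
  | orL {F F'} (G) : GStep F F' → GStep (.or F G) (.or F' G)
  | orR (F) {G G'} : GStep G G' → GStep (.or F G) (.or F G')
  | negC {F F'} : GStep F F' → GStep (.neg F) (.neg F')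
  | gradL {F F'} (G) : GStep F F' → GStep (.grad F G) (.grad F' G)
  | gradR (F) {G G'} : GStep G G' → GStep (.grad F G) (.grad F G')

/-- One-step rewriting with both the ¬-rules and the ⋗-rules (congruence closure). -/
inductive Step {A : Type} (c : A → A) : Fm A → Fm A → Prop where
  | negAtom (s) : Step c (.neg (.atom s)) (.atom (s.compl c))
  | negAnd (F G) : Step c (.neg (.and F G)) (.or (.neg F) (.neg G))
  | negOr (F G) : Step c (.neg (.or F G)) (.and (.neg F) (.neg G))
  | negGrad (s F) : Step c (.neg (.grad (.atom s) F))
      (.or (.atom (s.compl c)) (.grad (.atom s) (.neg F)))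
  | gradAssoc (F G H) : Step c (.grad (.grad F G) H)
      (.and (.grad F H) (.or (.grad F G) (.grad F (.grad G H))))
  | gradAndL (F G H) : Step c (.grad (.and F G) H) (.and (.grad F H) (.grad G H))
  | gradOrL (F G H) : Step c (.grad (.or F G) H) (.or (.grad F H) (.grad G H))
  | gradAndR (F G H) : Step c (.grad F (.and G H)) (.and (.grad F G) (.grad F H))
  | gradOrR (F G H) : Step c (.grad F (.or G H)) (.or (.grad F G) (.grad F H))
  | andL {F F'} (G) : Step c F F' → Step c (.and F G) (.and F' G)
  | andR (F) {G G'} : Step c G G' → Step c (.and F G) (.and F G')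
  | orL {F F'} (G) : Step c F F' → Step c (.or F G) (.or F' G)
  | orR (F) {G G'} : Step c G G' → Step c (.or F G) (.or F G')
  | negC {F F'} : Step c F F' → Step c (.neg F) (.neg F')
  | gradL {F F'} (G) : Step c F F' → Step c (.grad F G) (.grad F' G)
  | gradR (F) {G G'} : Step c G G' → Step c (.grad F G) (.grad F G')

/-- Reduction: reflexive-transitive closure of one-step rewriting (all rules). -/
def Red {A : Type} (c : A → A) : Fm A → Fm A → Prop :=
  Relation.ReflTransGen (Step c)

/-- Reduction using only the ⋗-rules. -/
def GRed {A : Type} : Fm A → Fm A → Prop :=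
  Relation.ReflTransGen GStep

/-- Unit chains (possibly of length one, i.e. a single atom): s₀⋗s₁⋗⋯⋗s_k. -/
inductive UnitTail {A : Type} : Fm A → Prop where
  | atom (s : Atom A) : UnitTail (.atom s)
  | grad (s : Atom A) {F : Fm A} : UnitTail F → UnitTail (.grad (.atom s) F)

/-- Formulas in unit chain expansion: built from atoms and unit chains via ∧ and ∨;
in particular no ¬ occurs and every ⋗ lies in a unit chain of atoms. -/
inductive UCE {A : Type} : Fm A → Prop where
  | atom (s : Atom A) : UCE (.atom s)
  | and {F G : Fm A} : UCE F → UCE G → UCE (.and F G)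
  | or {F G : Fm A} : UCE F → UCE G → UCE (.or F G)
  | chain (s : Atom A) {F : Fm A} : UnitTail F → UCE (.grad (.atom s) F)

/-- Negation-free formulas. -/
inductive NegFree {A : Type} : Fm A → Prop where
  | atom (s : Atom A) : NegFree (.atom s)
  | and {F G : Fm A} : NegFree F → NegFree G → NegFree (.and F G)
  | or {F G : Fm A} : NegFree F → NegFree G → NegFree (.or F G)
  | grad {F G : Fm A} : NegFree F → NegFree G → NegFree (.grad F G)

/-- A valuation frame: a local interpretation `I` on prefix-sequences and atoms,
subject to the conditions of gradual classical logic.  The global interpretation `J`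
is determined by `I` (see `GFrame.valAux`). -/
structure GFrame (A : Type) (c : A → A) : Type where
  I : List (Atom A) → Atom A → Bool
  I_top : ∀ ψ, I ψ .top = true
  I_bot : ∀ ψ, I ψ .bot = false
  I_compl : ∀ ψ (a : A), (I ψ (.lit a) = false ↔ I ψ (.lit (c a)) = true)
  I_sync : ∀ ψ ψ' s, ψ.length = ψ'.length → I ψ s = I ψ' s

/-- Valuation relative to a prefix ψ.  On a unit chain s₀⋗⋯⋗s_k (with prefix ε)
this computes the global interpretation J(s₀…s_k) = 1 iff every local step is 1;
∧ and ∨ are Boolean. -/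
def GFrame.valAux {A : Type} {c : A → A} (M : GFrame A c) :
    List (Atom A) → Fm A → Bool
  | ψ, .atom s => M.I ψ s
  | ψ, .and F G => M.valAux ψ F && M.valAux ψ G
  | ψ, .or F G => M.valAux ψ F || M.valAux ψ G
  | ψ, .neg F => !(M.valAux ψ F)
  | ψ, .grad (.atom s) G => M.I ψ s && M.valAux (ψ ++ [s]) G
  | _, .grad _ _ => false

/-- The valuation [M ⊨ F]. -/
def GFrame.val {A : Type} {c : A → A} (M : GFrame A c) (F : Fm A) : Bool :=
  M.valAux [] F

/-- Push `s ⋗ ·` through ∧ and ∨ (normalization step of `recursiveReduce`). -/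
def gradDist {A : Type} (s : Atom A) : Fm A → Fm A
  | .and F G => .and (gradDist s F) (gradDist s G)
  | .or F G => .or (gradDist s F) (gradDist s G)
  | F => .grad (.atom s) F

/-- `recursiveReduce`: swap ∧/∨, complement non-chain atoms, and replace a chain
with head s and tail T by s^c ∨ (s ⋗ recursiveReduce T), normalized into unit
chain expansion.  On a unit chain s₀⋗⋯⋗s_k it yields
s₀^c ∨ (s₀⋗s₁^c) ∨ ⋯ ∨ (s₀⋗⋯⋗s_{k−1}⋗s_k^c). -/
def recursiveReduce {A : Type} (c : A → A) : Fm A → Fm A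
  | .atom s => .atom (s.compl c)
  | .and F G => .or (recursiveReduce c F) (recursiveReduce c G)
  | .or F G => .and (recursiveReduce c F) (recursiveReduce c G)
  | .neg F => .neg (recursiveReduce c F)
  | .grad (.atom s) G => .or (.atom (s.compl c)) (gradDist s (recursiveReduce c G))
  | .grad F G => .grad (recursiveReduce c F) (recursiveReduce c G)

/-!
Since `⋗` distributes over `∧` and `∨` on either side, it suffices to reduce `T ⋗ U` for unit
chains `T` and `U`. This goes by induction on `T`: `(t ⋗ T') ⋗ U` rewrites to
`(t ⋗ U) ∧ ((t ⋗ T') ∨ (t ⋗ (T' ⋗ U)))`, where `T' ⋗ U` reduces to unit chain expansion by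
induction, and prefixing an atom `t ⋗ ·` to such a formula is again distributed over `∧` and `∨`
until it lands on unit chains.
-/

namespace GRed

variable {A : Type} {F F' G G' : Fm A}

theorem and (hF : GRed F F') (hG : GRed G G') : GRed (.and F G) (.and F' G') :=
  (Relation.ReflTransGen.lift (Fm.and · G) (fun _ _ => GStep.andL G) _ _ hF).trans
    (Relation.ReflTransGen.lift (Fm.and F') (fun _ _ => GStep.andR F') _ _ hG)

theorem or (hF : GRed F F') (hG : GRed G G') : GRed (.or F G) (.or F' G') :=
  (Relation.ReflTransGen.lift (Fm.or · G) (fun _ _ => GStep.orL G) _ _ hF).trans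
    (Relation.ReflTransGen.lift (Fm.or F') (fun _ _ => GStep.orR F') _ _ hG)

theorem grad_right (hG : GRed G G') : GRed (.grad F G) (.grad F G') :=
  Relation.ReflTransGen.lift (Fm.grad F) (fun _ _ => GStep.gradR F) _ _ hG

end GRed

theorem UnitTail.uce {A : Type} {T : Fm A} : UnitTail T → UCE T
  | .atom s => .atom s
  | .grad s hT => .chain s hT

def ReducesToUCE {A : Type} (F : Fm A) : Prop :=
  ∃ F' : Fm A, GRed F F' ∧ UCE F'

namespace ReducesToUCE

variable {A : Type} {F G H : Fm A}

theorem of_uce (hF : UCE F) : ReducesToUCE F :=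
  ⟨F, .refl, hF⟩

theorem of_gred (hFG : GRed F G) : ReducesToUCE G → ReducesToUCE F
  | ⟨G', hGG', hG'⟩ => ⟨G', hFG.trans hGG', hG'⟩

theorem and : ReducesToUCE F → ReducesToUCE G → ReducesToUCE (.and F G)
  | ⟨F', hF, uF⟩, ⟨G', hG, uG⟩ => ⟨.and F' G', hF.and hG, .and uF uG⟩

theorem or : ReducesToUCE F → ReducesToUCE G → ReducesToUCE (.or F G)
  | ⟨F', hF, uF⟩, ⟨G', hG, uG⟩ => ⟨.or F' G', hF.or hG, .or uF uG⟩

theorem grad_of_uce_right (hG : UCE G)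
    (hTail : ∀ {T}, UnitTail T → ReducesToUCE (.grad F T)) : ReducesToUCE (.grad F G) := by
  induction hG with
  | atom s => exact hTail (.atom s)
  | and _ _ ihF ihG => exact (ihF.and ihG).of_gred (.single (.gradAndR _ _ _))
  | or _ _ ihF ihG => exact (ihF.or ihG).of_gred (.single (.gradOrR _ _ _))
  | chain s hT => exact hTail (.grad s hT)

theorem grad_of_uce_left (hF : UCE F)
    (hTail : ∀ {T}, UnitTail T → ReducesToUCE (.grad T G)) : ReducesToUCE (.grad F G) := by
  induction hF with
  | atom s => exact hTail (.atom s)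
  | and _ _ ihF ihG => exact (ihF.and ihG).of_gred (.single (.gradAndL _ _ _))
  | or _ _ ihF ihG => exact (ihF.or ihG).of_gred (.single (.gradOrL _ _ _))
  | chain s hT => exact hTail (.grad s hT)

theorem atom_grad (s : Atom A) (hG : UCE G) : ReducesToUCE (.grad (.atom s) G) :=
  grad_of_uce_right hG fun hT => of_uce (.chain s hT)

theorem atom_grad_of_reducesToUCE (s : Atom A) :
    ReducesToUCE G → ReducesToUCE (.grad (.atom s) G)
  | ⟨_, hG, uG⟩ => (atom_grad s uG).of_gred hG.grad_right

theorem unitTail_grad {T U : Fm A} (hT : UnitTail T) (hU : UnitTail U) :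
    ReducesToUCE (.grad T U) := by
  induction hT with
  | atom t => exact of_uce (.chain t hU)
  | grad t hT' ih =>
    have hInner := atom_grad_of_reducesToUCE t ih
    exact ((of_uce (.chain t hU)).and ((of_uce (.chain t hT')).or hInner)).of_gred
      (.single (.gradAssoc _ _ _))

end ReducesToUCE

/-- If F₁ and F₂ are in unit chain expansion, then F₁⋗F₂ reduces
via the ⋗-rewrite rules to some formula in unit chain expansion. -/
theorem stmt1 {A : Type} {F₁ F₂ : Fm A} (h₁ : UCE F₁) (h₂ : UCE F₂) :
    ∃ F' : Fm A, GRed (Fm.grad F₁ F₂) F' ∧ UCE F' :=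
  ReducesToUCE.grad_of_uce_right h₂ fun hU =>
    ReducesToUCE.grad_of_uce_left h₁ fun hT => ReducesToUCE.unitTail_grad hT hU
end

section
/- For any formula F in unit chain expansion and any valuation frame M, exactly one of [M ⊨ F ∨ recursiveReduce(F)] = 1 and [M ⊨ F ∧ recursiveReduce(F)] = 1 fails; precisely, [M ⊨ F ∨ recursiveReduce(F)] = 1 and [M ⊨ F ∧ recursiveReduce(F)] = 0 (complementation law). -/
lemma I_compl_eq {A : Type} {c : A → A} (M : GFrame A c) (ψ : List (Atom A))
    (s : Atom A) : M.I ψ (s.compl c) = !M.I ψ s := by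
  cases s with
  | lit a =>
    have h := M.I_compl ψ a
    cases hI : M.I ψ (.lit a) with
    | true =>
      simp only [Atom.compl, Bool.not_true]
      by_contra hne
      have : M.I ψ (.lit (c a)) = true := by
        cases h2 : M.I ψ (.lit (c a)) <;> simp_all
      exact absurd (h.mpr this) (by simp [hI])
    | false => simp [Atom.compl, h.mp hI]
  | top => simp [Atom.compl, M.I_top, M.I_bot]
  | bot => simp [Atom.compl, M.I_top, M.I_bot]

lemma valAux_gradDist {A : Type} {c : A → A} (M : GFrame A c) (s : Atom A)
    (F : Fm A) (ψ : List (Atom A)) :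
    M.valAux ψ (gradDist s F) = (M.I ψ s && M.valAux (ψ ++ [s]) F) := by
  induction F generalizing ψ with
  | and F G ihF ihG =>
    simp [gradDist, GFrame.valAux, ihF, ihG, Bool.and_or_distrib_left]
    cases M.I ψ s <;> simp
  | or F G ihF ihG =>
    simp [gradDist, GFrame.valAux, ihF, ihG]
    cases M.I ψ s <;> simp
  | atom t => rfl
  | neg F _ => rfl
  | grad F G _ _ => rfl

lemma valAux_rr_tail {A : Type} {c : A → A} (M : GFrame A c) {F : Fm A}
    (h : UnitTail F) : ∀ ψ, M.valAux ψ (recursiveReduce c F) = !M.valAux ψ F := by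
  induction h with
  | atom s => intro ψ; simp [recursiveReduce, GFrame.valAux, I_compl_eq]
  | grad s hT ih =>
    intro ψ
    simp [recursiveReduce, GFrame.valAux, valAux_gradDist, I_compl_eq, ih]
    cases M.I ψ s <;> simp

lemma valAux_rr {A : Type} {c : A → A} (M : GFrame A c) {F : Fm A}
    (h : UCE F) : ∀ ψ, M.valAux ψ (recursiveReduce c F) = !M.valAux ψ F := by
  induction h with
  | atom s => intro ψ; simp [recursiveReduce, GFrame.valAux, I_compl_eq]
  | and hF hG ihF ihG => intro ψ; simp [recursiveReduce, GFrame.valAux, ihF, ihG]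
  | or hF hG ihF ihG => intro ψ; simp [recursiveReduce, GFrame.valAux, ihF, ihG]
  | chain s hT =>
    intro ψ
    simp [recursiveReduce, GFrame.valAux, valAux_gradDist, I_compl_eq,
      valAux_rr_tail M hT]
    cases M.I ψ s <;> simp

/-- complementation law for formulas in unit chain expansion. -/
theorem stmt5 {A : Type} {c : A → A} (hc : Function.Involutive c)
    (M : GFrame A c) {F : Fm A} (h : UCE F) :
    M.val (Fm.or F (recursiveReduce c F)) = true ∧
    M.val (Fm.and F (recursiveReduce c F)) = false := by
  have hr := valAux_rr M h []
  constructor <;> simp [GFrame.val, GFrame.valAux, hr]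
end

section
/- Fix a valuation frame M. The set of values {[M ⊨ f] : f a unit chain or atom}, equipped with Boolean meet ∧, Boolean join ∨, and the complementation induced by recursiveReduce, forms a Boolean algebra: i.e., associativity, commutativity, distributivity, idempotence, absorption, annihilation/identity with [M ⊨ ⊤] and [M ⊨ ⊥], complementation, and double negation all hold for valuations of formulas in unit chain expansion. -/
lemma compl_val {A : Type} {c : A → A} (M : GFrame A c) (ψ : List (Atom A))
    (s : Atom A) : M.I ψ (Atom.compl c s) = !(M.I ψ s) := by
  cases s with
  | lit a =>
    have h := M.I_compl ψ a
    simp only [Atom.compl]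
    cases hv : M.I ψ (Atom.lit a) with
    | false => simp [h.mp hv]
    | true =>
      simp only [Bool.not_true]
      by_contra hne
      have : M.I ψ (Atom.lit (c a)) = true := by
        revert hne; cases M.I ψ (Atom.lit (c a)) <;> simp
      have := h.mpr this
      simp [hv] at this
  | top => simp [Atom.compl, M.I_top, M.I_bot]
  | bot => simp [Atom.compl, M.I_top, M.I_bot]

lemma gradDist_val {A : Type} {c : A → A} (M : GFrame A c) (s : Atom A) :
    ∀ (F : Fm A) (ψ : List (Atom A)),
      M.valAux ψ (gradDist s F) = (M.I ψ s && M.valAux (ψ ++ [s]) F)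
  | .and F G, ψ => by
    simp only [gradDist, GFrame.valAux, gradDist_val M s F ψ, gradDist_val M s G ψ]
    cases M.I ψ s <;> simp
  | .or F G, ψ => by
    simp only [gradDist, GFrame.valAux, gradDist_val M s F ψ, gradDist_val M s G ψ]
    cases M.I ψ s <;> simp
  | .atom t, ψ => by simp [gradDist, GFrame.valAux]
  | .neg F, ψ => by simp [gradDist, GFrame.valAux]
  | .grad F G, ψ => by simp [gradDist, GFrame.valAux]

lemma rr_val_tail {A : Type} {c : A → A} (M : GFrame A c) {F : Fm A}
    (h : UnitTail F) : ∀ ψ, M.valAux ψ (recursiveReduce c F) = !(M.valAux ψ F) := by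
  induction h with
  | atom s => intro ψ; simp [recursiveReduce, GFrame.valAux, compl_val]
  | grad s hT ih =>
    intro ψ
    simp only [recursiveReduce, GFrame.valAux, gradDist_val, compl_val, ih]
    cases M.I ψ s <;> simp

lemma rr_val {A : Type} {c : A → A} (M : GFrame A c) {F : Fm A}
    (h : UCE F) : ∀ ψ, M.valAux ψ (recursiveReduce c F) = !(M.valAux ψ F) := by
  induction h with
  | atom s => intro ψ; simp [recursiveReduce, GFrame.valAux, compl_val]
  | and _ _ ihF ihG => intro ψ; simp [recursiveReduce, GFrame.valAux, ihF, ihG]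
  | or _ _ ihF ihG => intro ψ; simp [recursiveReduce, GFrame.valAux, ihF, ihG]
  | chain s hT =>
    intro ψ
    simp only [recursiveReduce, GFrame.valAux, gradDist_val, compl_val,
      rr_val_tail M hT]
    cases M.I ψ s <;> simp

lemma gradDist_UCE {A : Type} (s : Atom A) {F : Fm A} (h : UCE F) :
    UCE (gradDist s F) := by
  induction h with
  | atom t => exact UCE.chain s (UnitTail.atom t)
  | and _ _ ihF ihG => exact UCE.and ihF ihG
  | or _ _ ihF ihG => exact UCE.or ihF ihG
  | chain t hT => exact UCE.chain s (UnitTail.grad t hT)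

lemma rr_UCE_tail {A : Type} {c : A → A} {F : Fm A} (h : UnitTail F) :
    UCE (recursiveReduce c F) := by
  induction h with
  | atom s => exact UCE.atom _
  | grad s hT ih => exact UCE.or (UCE.atom _) (gradDist_UCE s ih)

lemma rr_UCE {A : Type} {c : A → A} {F : Fm A} (h : UCE F) :
    UCE (recursiveReduce c F) := by
  induction h with
  | atom s => exact UCE.atom _
  | and _ _ ihF ihG => exact UCE.or ihF ihG
  | or _ _ ihF ihG => exact UCE.and ihF ihG
  | chain s hT => exact UCE.or (UCE.atom _) (gradDist_UCE s (rr_UCE_tail hT))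

/-- the valuations of formulas in unit chain expansion, under Boolean
∧, ∨ and the complementation induced by recursiveReduce, obey all the laws of a
Boolean algebra. -/
theorem stmt7 {A : Type} {c : A → A} (hc : Function.Involutive c)
    (M : GFrame A c) {F G H : Fm A} (hF : UCE F) (hG : UCE G) (hH : UCE H) :
    (M.val (Fm.and F (Fm.and G H)) = M.val (Fm.and (Fm.and F G) H)) ∧
    (M.val (Fm.or F (Fm.or G H)) = M.val (Fm.or (Fm.or F G) H)) ∧
    (M.val (Fm.and F G) = M.val (Fm.and G F)) ∧
    (M.val (Fm.or F G) = M.val (Fm.or G F)) ∧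
    (M.val (Fm.and F (Fm.or G H)) = M.val (Fm.or (Fm.and F G) (Fm.and F H))) ∧
    (M.val (Fm.or F (Fm.and G H)) = M.val (Fm.and (Fm.or F G) (Fm.or F H))) ∧
    (M.val (Fm.and F F) = M.val F) ∧
    (M.val (Fm.or F F) = M.val F) ∧
    (M.val (Fm.and F (Fm.or F G)) = M.val F) ∧
    (M.val (Fm.or F (Fm.and F G)) = M.val F) ∧
    (M.val (Fm.and (Fm.atom .top) F) = M.val F) ∧
    (M.val (Fm.or (Fm.atom .top) F) = M.val (Fm.atom (A := A) .top)) ∧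
    (M.val (Fm.and (Fm.atom .bot) F) = M.val (Fm.atom (A := A) .bot)) ∧
    (M.val (Fm.or (Fm.atom .bot) F) = M.val F) ∧
    (M.val (Fm.or F (recursiveReduce c F)) = true) ∧
    (M.val (Fm.and F (recursiveReduce c F)) = false) ∧
    (M.val (recursiveReduce c (recursiveReduce c F)) = M.val F) := by
  have hrr := rr_val M hF []
  have hrr2 := rr_val M (rr_UCE (c := c) hF) []
  simp only [GFrame.val, GFrame.valAux, M.I_top, M.I_bot, hrr, hrr2]
  refine ⟨by ac_rfl, by ac_rfl, Bool.and_comm _ _, Bool.or_comm _ _,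
    Bool.and_or_distrib_left _ _ _, Bool.or_and_distrib_left _ _ _, ?_⟩
  cases M.valAux [] F <;> cases M.valAux [] G <;> simp
end

section
/- With implication defined by F₁ ⊃ F₂ := ¬F₁ ∨ F₂, gradual classical logic validates modus ponens semantically: for every valuation frame M and formulas F₁, F₂, if [M ⊨ F₁] = 1 and [M ⊨ F₁ ⊃ F₂] = 1 then [M ⊨ F₂] = 1, where the valuation of an arbitrary formula is that of any of its unit-chain-expansion reducts (well-defined by normalization). -/
section Aux

variable {A : Type} {c : A → A}

/-- Depth-indexed global interpretation. -/
def GFrame.J (M : GFrame A c) (n : ℕ) (s : Atom A) : Bool :=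
  M.I (List.replicate n Atom.top) s

lemma GFrame.I_eq_J (M : GFrame A c) (ψ : List (Atom A)) (s : Atom A) :
    M.I ψ s = M.J ψ.length s :=
  M.I_sync ψ _ s (by simp)

lemma GFrame.J_compl (M : GFrame A c) (n : ℕ) (s : Atom A) :
    M.J n (s.compl c) = !(M.J n s) := by
  cases s with
  | lit a =>
    have h := M.I_compl (List.replicate n Atom.top) a
    simp only [GFrame.J, Atom.compl]
    cases hb : M.I (List.replicate n Atom.top) (Atom.lit a) with
    | false => simpa using h.mp hb
    | true =>
      simp only [Bool.not_true]
      by_contra hne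
      have : M.I (List.replicate n Atom.top) (Atom.lit (c a)) = true := by
        cases hx : M.I (List.replicate n Atom.top) (Atom.lit (c a)) with
        | true => rfl
        | false => exact absurd hx hne
      rw [h.mpr this] at hb; exact absurd hb (by simp)
  | top => simp [GFrame.J, Atom.compl, M.I_top, M.I_bot]
  | bot => simp [GFrame.J, Atom.compl, M.I_top, M.I_bot]

/-- Compositional depth semantics, invariant under all rewrite rules. -/
def GFrame.w (M : GFrame A c) : Fm A → ℕ → Bool
  | .atom s, n => M.J n s
  | .and F G, n => M.w F n && M.w G n
  | .or F G, n => M.w F n || M.w G n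
  | .neg F, n => !(M.w F n)
  | .grad F G, n => M.w F n && M.w G (n + 1)

lemma GFrame.valAux_unitTail (M : GFrame A c) {F : Fm A} (h : UnitTail F) :
    ∀ ψ, M.valAux ψ F = M.w F ψ.length := by
  induction h with
  | atom s => intro ψ; simp [GFrame.valAux, GFrame.w, M.I_eq_J]
  | grad s hF ih =>
    intro ψ
    simp [GFrame.valAux, GFrame.w, M.I_eq_J, ih (ψ ++ [s])]

lemma GFrame.valAux_uce (M : GFrame A c) {F : Fm A} (h : UCE F) :
    ∀ ψ, M.valAux ψ F = M.w F ψ.length := by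
  induction h with
  | atom s => intro ψ; simp [GFrame.valAux, GFrame.w, M.I_eq_J]
  | and hF hG ihF ihG => intro ψ; simp [GFrame.valAux, GFrame.w, ihF, ihG]
  | or hF hG ihF ihG => intro ψ; simp [GFrame.valAux, GFrame.w, ihF, ihG]
  | chain s hF =>
    intro ψ
    simp [GFrame.valAux, GFrame.w, M.I_eq_J, M.valAux_unitTail hF (ψ ++ [s])]

lemma GFrame.w_step (M : GFrame A c) {F F' : Fm A} (h : Step c F F') :
    ∀ n, M.w F n = M.w F' n := by
  induction h with
  | negAtom s => intro n; simp [GFrame.w, M.J_compl]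
  | negAnd F G => intro n; simp [GFrame.w]
  | negOr F G => intro n; simp [GFrame.w]
  | negGrad s F =>
    intro n
    simp only [GFrame.w, M.J_compl]
    cases M.J n s <;> cases M.w F (n + 1) <;> rfl
  | gradAssoc F G H =>
    intro n
    simp only [GFrame.w]
    cases M.w F n <;> cases M.w G (n + 1) <;> cases M.w H (n + 1) <;>
      cases M.w H (n + 2) <;> rfl
  | gradAndL F G H =>
    intro n
    simp only [GFrame.w]
    cases M.w F n <;> cases M.w G n <;> cases M.w H (n + 1) <;> rfl
  | gradOrL F G H =>
    intro n
    simp only [GFrame.w]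
    cases M.w F n <;> cases M.w G n <;> cases M.w H (n + 1) <;> rfl
  | gradAndR F G H =>
    intro n
    simp only [GFrame.w]
    cases M.w F n <;> cases M.w G (n + 1) <;> cases M.w H (n + 1) <;> rfl
  | gradOrR F G H =>
    intro n
    simp only [GFrame.w]
    cases M.w F n <;> cases M.w G (n + 1) <;> cases M.w H (n + 1) <;> rfl
  | andL G _ ih => intro n; simp [GFrame.w, ih]
  | andR F _ ih => intro n; simp [GFrame.w, ih]
  | orL G _ ih => intro n; simp [GFrame.w, ih]
  | orR F _ ih => intro n; simp [GFrame.w, ih]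
  | negC _ ih => intro n; simp [GFrame.w, ih]
  | gradL G _ ih => intro n; simp [GFrame.w, ih]
  | gradR F _ ih => intro n; simp [GFrame.w, ih]

lemma GFrame.w_red (M : GFrame A c) {F F' : Fm A} (h : Red c F F') :
    ∀ n, M.w F n = M.w F' n := by
  induction h with
  | refl => intro n; rfl
  | tail _ hstep ih => intro n; rw [ih n, M.w_step hstep n]

end Aux

/-- with F₁ ⊃ F₂ := ¬F₁ ∨ F₂, modus ponens holds semantically,
values of arbitrary formulas being those of their unit-chain-expansion reducts. -/
theorem stmt16 {A : Type} (c : A → A) (hc : Function.Involutive c)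
    (M : GFrame A c) (F₁ F₂ : Fm A) (R₁ R₂ R₃ : Fm A)
    (hr₁ : Red c F₁ R₁) (hu₁ : UCE R₁)
    (hr₂ : Red c F₂ R₂) (hu₂ : UCE R₂)
    (hr₃ : Red c (Fm.or (Fm.neg F₁) F₂) R₃) (hu₃ : UCE R₃)
    (h1 : M.val R₁ = true) (h3 : M.val R₃ = true) :
    M.val R₂ = true := by
  have e₁ : M.val R₁ = M.w F₁ 0 := by
    rw [GFrame.val, M.valAux_uce hu₁ [], M.w_red hr₁ 0]; rfl
  have e₂ : M.val R₂ = M.w F₂ 0 := by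
    rw [GFrame.val, M.valAux_uce hu₂ [], M.w_red hr₂ 0]; rfl
  have e₃ : M.val R₃ = M.w (Fm.or (Fm.neg F₁) F₂) 0 := by
    rw [GFrame.val, M.valAux_uce hu₃ [], M.w_red hr₃ 0]; rfl
  rw [e₁] at h1
  rw [e₃] at h3
  rw [e₂]
  simp only [GFrame.w, h1] at h3 ⊢
  simpa using h3
end
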